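/- arXiv:1412.4076 — 4 statements merged into one kernel-verified Lean document; each statement's English description precedes it below -/
import Mathlib

section
/- For every integer k ≥ 1, d^2_MP(T^k_AA, T^k_BB) = 12k. -/
/-!
Sankoff's recursion computes, for a character `f`, the cost `m_f(T, c)` of a best extension of
`f` to `T` hung below a parent vertex in state `c`, and `l_f(T) = min_c m_f(T, c)`. Joining two
trees under a new root is monotone for this recursion, so if `m_f(T₁, c)` and `m_f(T₂, c)` differ
by at most `d` for all `f` and `c`, these bounds add up along a common backbone. An exhaustive
check over the `2⁸` binary characters shows that `T_a` and `T_b` are `3`-close in this sense;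
`T^k_AA` and `T^k_BB` carry `4k` copies of them on the same backbone, so
`|l_f(T^k_AA) − l_f(T^k_BB)| ≤ 12k` for every binary `f`. Conversely, the character that is `1`
exactly on taxa `3, …, 6` of each copy costs `1` on `T_a` and `4` on `T_b` whatever the parent
state, so its scores on the whole trees are `4k` and `16k`.
-/

namespace MPDist

/-- A rooted binary phylogenetic tree: leaves are labelled by taxa,
every internal vertex (including the root) has exactly two children. -/
inductive PTree (X : Type) : Type
  | leaf : X → PTree X
  | node : PTree X → PTree X → PTree X

namespace PTree

/-- The list of leaf labels (taxa) of a tree. -/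
def leaves {X : Type} : PTree X → List X
  | .leaf x => [x]
  | .node l r => l.leaves ++ r.leaves

/-- Relabelling of taxa. -/
def map {X Y : Type} (φ : X → Y) : PTree X → PTree Y
  | .leaf x => .leaf (φ x)
  | .node l r => .node (l.map φ) (r.map φ)

end PTree

/-- `T` is a phylogenetic tree on the taxon set `X`:
its leaves are bijectively labelled by the elements of `X`. -/
def IsPhylo {X : Type} (T : PTree X) : Prop :=
  T.leaves.Nodup ∧ ∀ x : X, x ∈ T.leaves

/-- A state-labelled binary tree (an extension assigns a state to every vertex). -/
inductive ETree (C : Type) : Type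
  | leaf : C → ETree C
  | node : C → ETree C → ETree C → ETree C

namespace ETree

/-- The state at the root. -/
def root {C : Type} : ETree C → C
  | .leaf c => c
  | .node c _ _ => c

/-- The number of edges `{u,v}` with different states at the two endpoints
(substitutions/mutations). -/
def changes {C : Type} [DecidableEq C] : ETree C → ℕ
  | .leaf _ => 0
  | .node c l r =>
      ((if l.root = c then 0 else 1) + (if r.root = c then 0 else 1)) +
        (l.changes + r.changes)

end ETree

/-- `g` is an extension of the character `f` to the tree `T`: it has the same
shape as `T`, assigns a state to every vertex, and agrees with `f` on the taxa. -/
inductive IsExtension {X C : Type} (f : X → C) : PTree X → ETree C → Prop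
  | leaf (x : X) : IsExtension f (.leaf x) (.leaf (f x))
  | node {l r : PTree X} {gl gr : ETree C} (c : C) :
      IsExtension f l gl → IsExtension f r gr →
      IsExtension f (.node l r) (.node c gl gr)

/-- The parsimony score `l_f(T)`: the minimum number of mutation edges
over all extensions of `f` to `T`. -/
noncomputable def pscore {X C : Type} [DecidableEq C] (f : X → C) (T : PTree X) : ℕ :=
  sInf { k : ℕ | ∃ g : ETree C, IsExtension f T g ∧ g.changes = k }

/-- The MP distance `d_MP(T1,T2) = max_f |l_f(T1) − l_f(T2)|`, the maximum taken
over all characters `f` on the taxon set (states drawn from `ℕ`). -/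
noncomputable def dMP {X : Type} (T1 T2 : PTree X) : ℕ :=
  sSup { k : ℕ | ∃ f : X → ℕ, k = ((pscore f T1 : ℤ) - (pscore f T2 : ℤ)).natAbs }

/-- `d^i_MP(T1,T2)`: as `dMP`, but over characters using at most `i` states. -/
noncomputable def dMPk {X : Type} (i : ℕ) (T1 T2 : PTree X) : ℕ :=
  sSup { k : ℕ | ∃ f : X → Fin i, k = ((pscore f T1 : ℤ) - (pscore f T2 : ℤ)).natAbs }

/-- `max_f (l_f(T2) − l_f(T1))` over all characters `f`. -/
noncomputable def maxDiff {X : Type} (T1 T2 : PTree X) : ℤ :=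
  sSup { d : ℤ | ∃ f : X → ℕ, d = (pscore f T2 : ℤ) - (pscore f T1 : ℤ) }

/-- `max_f (l_f(T2) − l_f(T1))` over all characters `f` with at most `i` states. -/
noncomputable def maxDiffk {X : Type} (i : ℕ) (T1 T2 : PTree X) : ℤ :=
  sSup { d : ℤ | ∃ f : X → Fin i, d = (pscore f T2 : ℤ) - (pscore f T1 : ℤ) }

/-- `gap(T1,T2) = |max_f(l_f(T2)−l_f(T1)) − max_f(l_f(T1)−l_f(T2))|`. -/
noncomputable def gap {X : Type} (T1 T2 : PTree X) : ℤ :=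
  |maxDiff T1 T2 - maxDiff T2 T1|

/-- `gap` restricted to characters with at most `i` states. -/
noncomputable def gapk {X : Type} (i : ℕ) (T1 T2 : PTree X) : ℤ :=
  |maxDiffk i T1 T2 - maxDiffk i T2 T1|

/-- `s` occurs as a (rooted) subtree of `t`. -/
inductive IsSubtree {X : Type} : PTree X → PTree X → Prop
  | refl (t : PTree X) : IsSubtree t t
  | left {s l r : PTree X} : IsSubtree s l → IsSubtree s (.node l r)
  | right {s l r : PTree X} : IsSubtree s r → IsSubtree s (.node l r)

/-- Taxa `a`, `b` form a cherry of `T`: they are leaves with a common parent. -/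
def IsCherry {X : Type} (T : PTree X) (a b : X) : Prop :=
  IsSubtree (.node (.leaf a) (.leaf b)) T

/-- Relabel a tree on taxa `ℕ` by shifting all labels up by `s` (fresh copies). -/
def shiftT (s : ℕ) (T : PTree ℕ) : PTree ℕ := T.map (fun x => x + s)

/-- `T_a = (((((2,3),4),5),6),1)` on taxa `{1,…,6}` (taxon `j` encoded as `j-1`). -/
def Ta6 : PTree ℕ :=
  .node (.node (.node (.node (.node (.leaf 1) (.leaf 2)) (.leaf 3)) (.leaf 4)) (.leaf 5)) (.leaf 0)

/-- `T_b = ((((2,6),(3,4)),5),1)` on taxa `{1,…,6}` (taxon `j` encoded as `j-1`). -/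
def Tb6 : PTree ℕ :=
  .node (.node (.node (.node (.leaf 1) (.leaf 5)) (.node (.leaf 2) (.leaf 3))) (.leaf 4)) (.leaf 0)

/-- `T_A`: two disjoint copies of `T_a` joined under a new root (12 taxa). -/
def TA12 : PTree ℕ := .node Ta6 (shiftT 6 Ta6)

/-- `T_B`: two disjoint copies of `T_b` joined under a new root (12 taxa). -/
def TB12 : PTree ℕ := .node Tb6 (shiftT 6 Tb6)

/-- `TkA k` is the tree `T^{k+1}_A`: `k+1` disjoint copies of `T_A` arranged
along a caterpillar backbone (so `TkA 0 = T^1_A = T_A`). -/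
def TkA : ℕ → PTree ℕ
  | 0 => TA12
  | k+1 => .node (TkA k) (shiftT (12*(k+1)) TA12)

/-- `TkB k` is the tree `T^{k+1}_B`. -/
def TkB : ℕ → PTree ℕ
  | 0 => TB12
  | k+1 => .node (TkB k) (shiftT (12*(k+1)) TB12)

/-- `T_a = (((5,(6,4)),3),((1,(8,2)),7))` on taxa `{1,…,8}` (taxon `j` encoded as `j-1`). -/
def Ta8 : PTree ℕ :=
  .node (.node (.node (.leaf 4) (.node (.leaf 5) (.leaf 3))) (.leaf 2))
        (.node (.node (.leaf 0) (.node (.leaf 7) (.leaf 1))) (.leaf 6))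

/-- `T_b = (((7,((4,2),6)),3),(8,(1,5)))` on taxa `{1,…,8}` (taxon `j` encoded as `j-1`). -/
def Tb8 : PTree ℕ :=
  .node (.node (.node (.leaf 6) (.node (.node (.leaf 3) (.leaf 1)) (.leaf 5))) (.leaf 2))
        (.node (.leaf 7) (.node (.leaf 0) (.leaf 4)))

/-- `T_A` (2-state construction): two disjoint copies of `T_a` under a new root (16 taxa). -/
def TA16 : PTree ℕ := .node Ta8 (shiftT 8 Ta8)

/-- `T_B` (2-state construction): two disjoint copies of `T_b` under a new root (16 taxa). -/
def TB16 : PTree ℕ := .node Tb8 (shiftT 8 Tb8)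

/-- `T_AA`: two disjoint copies of `T_A` under a new root (32 taxa). -/
def TAA : PTree ℕ := .node TA16 (shiftT 16 TA16)

/-- `T_BB`: two disjoint copies of `T_B` under a new root (32 taxa). -/
def TBB : PTree ℕ := .node TB16 (shiftT 16 TB16)

/-- `TkAA k` is the tree `T^{k+1}_AA` (so `TkAA 0 = T^1_AA = T_AA`). -/
def TkAA : ℕ → PTree ℕ
  | 0 => TAA
  | k+1 => .node (TkAA k) (shiftT (32*(k+1)) TAA)

/-- `TkBB k` is the tree `T^{k+1}_BB`. -/
def TkBB : ℕ → PTree ℕ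
  | 0 => TBB
  | k+1 => .node (TkBB k) (shiftT (32*(k+1)) TBB)

section Sankoff

variable {X Y C : Type} [DecidableEq C] [Fintype C]

/-- Sankoff's dynamic program with unit costs: `rootCost f T c` is the least value of
`g.changes + [g.root ≠ c]` over extensions `g` of `f` to `T`, i.e. the score of `T`
hung below a parent vertex in state `c`. -/
def rootCost (f : X → C) : PTree X → C → ℕ
  | .leaf x, c => if f x = c then 0 else 1
  | .node l r, c => Finset.univ.inf' ⟨c, Finset.mem_univ c⟩
      fun s => rootCost f l s + rootCost f r s + if s = c then 0 else 1

theorem rootCost_le_of_isExtension {f : X → C} {T : PTree X} {g : ETree C}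
    (hg : IsExtension f T g) (c : C) :
    rootCost f T c ≤ g.changes + if g.root = c then 0 else 1 := by
  induction hg generalizing c with
  | leaf x => exact (Nat.zero_add _).symm.le
  | @node l r gl gr s _ _ ihl ihr =>
    have hl := ihl s
    have hr := ihr s
    calc rootCost f (.node l r) c
        ≤ rootCost f l s + rootCost f r s + if s = c then 0 else 1 :=
          Finset.inf'_le _ (Finset.mem_univ s)
      _ ≤ (ETree.node s gl gr).changes + if (ETree.node s gl gr).root = c then 0 else 1 := by
          rw [show (ETree.node s gl gr).root = s from rfl, ETree.changes]
          omega

theorem exists_isExtension_rootCost_eq (f : X → C) (T : PTree X) (c : C) :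
    ∃ g, IsExtension f T g ∧ (g.changes + if g.root = c then 0 else 1) = rootCost f T c := by
  induction T generalizing c with
  | leaf x => exact ⟨.leaf (f x), .leaf x, Nat.zero_add _⟩
  | node l r ihl ihr =>
    obtain ⟨s, -, hs⟩ := Finset.exists_mem_eq_inf' ⟨c, Finset.mem_univ c⟩
      fun s => rootCost f l s + rootCost f r s + if s = c then 0 else 1
    obtain ⟨gl, hgl, el⟩ := ihl s
    obtain ⟨gr, hgr, er⟩ := ihr s
    refine ⟨.node s gl gr, .node s hgl hgr, ?_⟩
    rw [show (ETree.node s gl gr).root = s from rfl, ETree.changes, rootCost, hs, ← el, ← er]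
    omega

theorem pscore_le_rootCost (f : X → C) (T : PTree X) (c : C) : pscore f T ≤ rootCost f T c := by
  obtain ⟨g, hg, hgc⟩ := exists_isExtension_rootCost_eq f T c
  have hle : pscore f T ≤ g.changes := Nat.sInf_le ⟨g, hg, rfl⟩
  exact hle.trans (hgc ▸ Nat.le_add_right _ _)

theorem exists_rootCost_eq_pscore (f : X → C) (T : PTree X) [Nonempty C] :
    ∃ c, rootCost f T c = pscore f T := by
  obtain ⟨g₀, hg₀, -⟩ := exists_isExtension_rootCost_eq f T (Classical.arbitrary C)
  obtain ⟨g, hg, hgc⟩ : pscore f T ∈ {k | ∃ g, IsExtension f T g ∧ g.changes = k} :=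
    Nat.sInf_mem ⟨_, g₀, hg₀, rfl⟩
  refine ⟨g.root, le_antisymm ?_ (pscore_le_rootCost f T _)⟩
  simpa [hgc] using rootCost_le_of_isExtension hg g.root

theorem rootCost_map (f : X → C) (φ : Y → X) (T : PTree Y) (c : C) :
    rootCost f (T.map φ) c = rootCost (f ∘ φ) T c := by
  induction T generalizing c with
  | leaf x => rfl
  | node l r ihl ihr => simp only [PTree.map, rootCost, ihl, ihr]

theorem rootCost_congr {f f' : X → C} {T : PTree X} (h : ∀ x ∈ T.leaves, f x = f' x) (c : C) :
    rootCost f T c = rootCost f' T c := by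
  induction T generalizing c with
  | leaf x => simp [rootCost, h x (by simp [PTree.leaves])]
  | node l r ihl ihr =>
    simp only [rootCost, ihl fun x hx => h x (by simp [PTree.leaves, hx]),
      ihr fun x hx => h x (by simp [PTree.leaves, hx])]

theorem rootCost_node_le {f : X → C} {l₁ r₁ l₂ r₂ : PTree X} {d₁ d₂ : ℕ}
    (hl : ∀ s, rootCost f l₁ s ≤ rootCost f l₂ s + d₁)
    (hr : ∀ s, rootCost f r₁ s ≤ rootCost f r₂ s + d₂) (c : C) :
    rootCost f (.node l₁ r₁) c ≤ rootCost f (.node l₂ r₂) c + (d₁ + d₂) := by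
  obtain ⟨s, -, hs⟩ := Finset.exists_mem_eq_inf' ⟨c, Finset.mem_univ c⟩
    fun s => rootCost f l₂ s + rootCost f r₂ s + if s = c then 0 else 1
  have := hl s
  have := hr s
  calc rootCost f (.node l₁ r₁) c
      ≤ rootCost f l₁ s + rootCost f r₁ s + if s = c then 0 else 1 :=
        Finset.inf'_le _ (Finset.mem_univ s)
    _ ≤ rootCost f (.node l₂ r₂) c + (d₁ + d₂) := by rw [rootCost, hs]; omega

theorem rootCost_node_of_forall_eq {f : X → C} {l r : PTree X} {a b : ℕ}
    (hl : ∀ s, rootCost f l s = a) (hr : ∀ s, rootCost f r s = b) (c : C) :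
    rootCost f (.node l r) c = a + b := by
  refine le_antisymm ?_ (Finset.le_inf' _ _ fun s _ => by simp [hl, hr])
  exact (Finset.inf'_le _ (Finset.mem_univ c)).trans (by simp [hl, hr])

theorem pscore_eq_of_forall_rootCost_eq [Nonempty C] {f : X → C} {T : PTree X} {m : ℕ}
    (h : ∀ c, rootCost f T c = m) : pscore f T = m := by
  obtain ⟨c, hc⟩ := exists_rootCost_eq_pscore f T
  rw [← hc, h]

theorem rootCost_shiftT {f : ℕ → C} {s : ℕ} (hf : ∀ x, f (x + s) = f x) (T : PTree ℕ)
    (c : C) :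
    rootCost f (shiftT s T) c = rootCost f T c := by
  rw [shiftT, rootCost_map]
  exact congrArg (rootCost · T c) (funext hf)

variable (C) in
def CostClose (d : ℕ) (T₁ T₂ : PTree X) : Prop :=
  ∀ (f : X → C) (c : C),
    rootCost f T₁ c ≤ rootCost f T₂ c + d ∧ rootCost f T₂ c ≤ rootCost f T₁ c + d

theorem CostClose.node {d₁ d₂ : ℕ} {l₁ r₁ l₂ r₂ : PTree X}
    (hl : CostClose C d₁ l₁ l₂) (hr : CostClose C d₂ r₁ r₂) :
    CostClose C (d₁ + d₂) (.node l₁ r₁) (.node l₂ r₂) := fun f c =>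
  ⟨rootCost_node_le (fun s => (hl f s).1) (fun s => (hr f s).1) c,
    rootCost_node_le (fun s => (hl f s).2) (fun s => (hr f s).2) c⟩

theorem CostClose.shiftT {d : ℕ} {T₁ T₂ : PTree ℕ} (h : CostClose C d T₁ T₂) (s : ℕ) :
    CostClose C d (shiftT s T₁) (shiftT s T₂) := fun f c => by
  simpa only [MPDist.shiftT, rootCost_map] using h (f ∘ (· + s)) c

theorem CostClose.natAbs_pscore_sub_le [Nonempty C] {d : ℕ} {T₁ T₂ : PTree X}
    (h : CostClose C d T₁ T₂) (f : X → C) :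
    ((pscore f T₁ : ℤ) - pscore f T₂).natAbs ≤ d := by
  obtain ⟨c₁, hc₁⟩ := exists_rootCost_eq_pscore f T₁
  obtain ⟨c₂, hc₂⟩ := exists_rootCost_eq_pscore f T₂
  have := (h f c₂).1
  have := (h f c₁).2
  have := pscore_le_rootCost f T₁ c₂
  have := pscore_le_rootCost f T₂ c₁
  omega

def extendFin [Inhabited C] {n : ℕ} (v : Fin n → C) (x : ℕ) : C :=
  if h : x < n then v ⟨x, h⟩ else default

theorem costClose_of_forall_fin [Inhabited C] {n d : ℕ} {T₁ T₂ : PTree ℕ}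
    (h₁ : ∀ x ∈ T₁.leaves, x < n) (h₂ : ∀ x ∈ T₂.leaves, x < n)
    (h : ∀ (v : Fin n → C) (c : C),
      rootCost (extendFin v) T₁ c ≤ rootCost (extendFin v) T₂ c + d ∧
        rootCost (extendFin v) T₂ c ≤ rootCost (extendFin v) T₁ c + d) :
    CostClose C d T₁ T₂ := fun f c => by
  have agree {T : PTree ℕ} (hT : ∀ x ∈ T.leaves, x < n) :
      rootCost (extendFin fun i : Fin n => f i) T c = rootCost f T c :=
    rootCost_congr (fun x hx => by simp [extendFin, hT x hx]) c
  simpa only [agree h₁, agree h₂] using h (fun i => f i) c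

end Sankoff

set_option maxRecDepth 10000 in
theorem costClose_Ta8_Tb8 : CostClose (Fin 2) 3 Ta8 Tb8 :=
  costClose_of_forall_fin (n := 8) (by decide) (by decide) (by decide)

theorem costClose_TkAA_TkBB (n : ℕ) : CostClose (Fin 2) (12 * (n + 1)) (TkAA n) (TkBB n) := by
  have h16 : CostClose (Fin 2) 6 TA16 TB16 :=
    costClose_Ta8_Tb8.node (costClose_Ta8_Tb8.shiftT 8)
  have h32 : CostClose (Fin 2) 12 TAA TBB := h16.node (h16.shiftT 16)
  induction n with
  | zero => exact h32
  | succ n ih => exact ih.node (h32.shiftT _)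

/-- In the paper's numbering: state `1` exactly on taxa `3, …, 6` of each copy of `T_a`, `T_b`. -/
def witnessChar (x : ℕ) : Fin 2 := if 2 ≤ x % 8 ∧ x % 8 ≤ 5 then 1 else 0

theorem witnessChar_add_of_dvd {s : ℕ} (hs : 8 ∣ s) (x : ℕ) :
    witnessChar (x + s) = witnessChar x := by
  obtain ⟨t, rfl⟩ := hs
  simp [witnessChar, Nat.add_mul_mod_self_left]

theorem rootCost_witnessChar_Ta8 : ∀ c, rootCost witnessChar Ta8 c = 1 := by decide

theorem rootCost_witnessChar_Tb8 : ∀ c, rootCost witnessChar Tb8 c = 4 := by decide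

theorem rootCost_witnessChar_node_shiftT {l r : PTree ℕ} {a b s : ℕ}
    (hl : ∀ c, rootCost witnessChar l c = a) (hr : ∀ c, rootCost witnessChar r c = b)
    (hs : 8 ∣ s) (c : Fin 2) :
    rootCost witnessChar (.node l (shiftT s r)) c = a + b :=
  rootCost_node_of_forall_eq hl
    (fun c => (rootCost_shiftT (witnessChar_add_of_dvd hs) r c).trans (hr c)) c

theorem rootCost_witnessChar_TkAA (n : ℕ) (c : Fin 2) :
    rootCost witnessChar (TkAA n) c = 4 * (n + 1) := by
  have hA : ∀ c, rootCost witnessChar TA16 c = 1 + 1 :=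
    rootCost_witnessChar_node_shiftT rootCost_witnessChar_Ta8 rootCost_witnessChar_Ta8
      (by norm_num)
  have hAA : ∀ c, rootCost witnessChar TAA c = 2 + 2 :=
    rootCost_witnessChar_node_shiftT hA hA (by norm_num)
  induction n generalizing c with
  | zero => exact hAA c
  | succ n ih =>
    exact (rootCost_witnessChar_node_shiftT ih hAA (Dvd.dvd.mul_right (by norm_num) _) c).trans
      (by ring)

theorem rootCost_witnessChar_TkBB (n : ℕ) (c : Fin 2) :
    rootCost witnessChar (TkBB n) c = 16 * (n + 1) := by
  have hB : ∀ c, rootCost witnessChar TB16 c = 4 + 4 :=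
    rootCost_witnessChar_node_shiftT rootCost_witnessChar_Tb8 rootCost_witnessChar_Tb8
      (by norm_num)
  have hBB : ∀ c, rootCost witnessChar TBB c = 8 + 8 :=
    rootCost_witnessChar_node_shiftT hB hB (by norm_num)
  induction n generalizing c with
  | zero => exact hBB c
  | succ n ih =>
    exact (rootCost_witnessChar_node_shiftT ih hBB (Dvd.dvd.mul_right (by norm_num) _) c).trans
      (by ring)

/-- for every `k ≥ 1`, `d^2_MP(T^k_AA, T^k_BB) = 12k`.
(Recall `TkAA (k-1) = T^k_AA`.) -/
theorem dMP2_TkAA_TkBB (k : ℕ) (hk : 1 ≤ k) :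
    dMPk 2 (TkAA (k - 1)) (TkBB (k - 1)) = 12 * k := by
  obtain ⟨n, rfl⟩ := Nat.exists_eq_add_of_le' hk
  rw [Nat.add_sub_cancel]
  refine IsGreatest.csSup_eq ⟨⟨witnessChar, ?_⟩, ?_⟩
  · rw [pscore_eq_of_forall_rootCost_eq (rootCost_witnessChar_TkAA n),
      pscore_eq_of_forall_rootCost_eq (rootCost_witnessChar_TkBB n)]
    omega
  · rintro _ ⟨f, rfl⟩
    exact (costClose_TkAA_TkBB n).natAbs_pscore_sub_le f

end MPDist
end

section
/- Let T1 and T2 be rooted binary phylogenetic trees on the same taxon set X, and let f be an optimal character for d_MP(T1,T2) such that l_f(T1) < l_f(T2). Suppose T1 contains two cherries (a,b) and (c,d) and that in T2 the cherries (a,c) and (b,d) appear under a common parent (a double cherry). Then there exists an optimal character f'' such that f''(a) = f''(b), f''(c) = f''(d), f''(a) ≠ f''(c), and f'' agrees with f on all taxa other than a, b, c, d. -/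
/-!
Take an optimal extension of `f` to `T1`, let `x` and `τ` be the states of the parents of the
cherries `(a,b)` and `(c,d)`, and recolour `a, b` to `x` and `c, d` to `z`, where `z = τ` unless
`τ = x`, in which case `z` is a fresh state. In `T1` this removes the mutations on the four
pendant edges and costs at most one new mutation. In `T2` both inner cherries of the double cherry
now carry two different states, which forces at least two mutations inside it; grafting the states
of `f` back onto it, with a well chosen root state, shows that `l_f(T2)` exceeds the new score by no
more than `T1` gained. Hence the new character beats `f` for `l(T2) - l(T1)`, so it is optimal too.
-/

namespace MPDist

section Parsimony

variable {X C : Type}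

theorem IsSubtree.leaves_sublist {S T : PTree X} (h : IsSubtree S T) :
    S.leaves.Sublist T.leaves := by
  induction h with
  | refl => exact List.Sublist.refl _
  | left _ ih => exact ih.trans (List.sublist_append_left _ _)
  | right _ ih => exact ih.trans (List.sublist_append_right _ _)

theorem IsExtension.exists (f : X → C) : ∀ T : PTree X, ∃ g, IsExtension f T g
  | .leaf x => ⟨_, .leaf x⟩
  | .node l r =>
    have ⟨gl, hl⟩ := IsExtension.exists f l
    have ⟨_, hr⟩ := IsExtension.exists f r
    ⟨_, .node gl.root hl hr⟩

theorem IsExtension.leaf_of_eq {f : X → C} {x : X} {c : C} (h : f x = c) :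
    IsExtension f (.leaf x) (.leaf c) :=
  h ▸ .leaf x

theorem IsExtension.congr {f f' : X → C} {T : PTree X} {g : ETree C} (hg : IsExtension f T g)
    (hff' : ∀ x ∈ T.leaves, f x = f' x) : IsExtension f' T g := by
  induction hg with
  | leaf x => exact .leaf_of_eq (hff' x (List.mem_singleton_self x)).symm
  | node c _ _ ihl ihr =>
    exact .node c (ihl fun x hx => hff' x (List.mem_append_left _ hx))
      (ihr fun x hx => hff' x (List.mem_append_right _ hx))

section Recolour

variable [DecidableEq X]

def recolour (f : X → C) (a b : X) (y : C) : X → C := fun x => if x = a ∨ x = b then y else f x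

variable (f : X → C) (a b : X) (y : C)

@[simp] theorem recolour_apply_left : recolour f a b y a = y := if_pos (.inl rfl)

@[simp] theorem recolour_apply_right : recolour f a b y b = y := if_pos (.inr rfl)

theorem recolour_apply_of_ne {x : X} (ha : x ≠ a) (hb : x ≠ b) : recolour f a b y x = f x :=
  if_neg (by tauto)

end Recolour

theorem IsSubtree.ne_of_double_cherry {T : PTree X} {a b c d : X}
    (hQ : IsSubtree (.node (.node (.leaf a) (.leaf c)) (.node (.leaf b) (.leaf d))) T)
    (hT : T.leaves.Nodup) : a ≠ c ∧ a ≠ d ∧ b ≠ c ∧ b ≠ d := by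
  have := hQ.leaves_sublist.nodup hT
  simp only [PTree.leaves, List.cons_append, List.nil_append, List.nodup_cons, List.mem_cons,
    List.not_mem_nil, or_false, not_or] at this
  tauto

theorem ETree.root_leaf (c : C) : (ETree.leaf c).root = c := rfl

theorem ETree.root_node (c : C) (l r : ETree C) : (ETree.node c l r).root = c := rfl

variable [DecidableEq C]

def mismatch (u v : C) : ℕ := if u = v then 0 else 1

@[simp] theorem mismatch_self (u : C) : mismatch u u = 0 := if_pos rfl

theorem mismatch_of_ne {u v : C} (h : u ≠ v) : mismatch u v = 1 := if_neg h

theorem mismatch_le_one (u v : C) : mismatch u v ≤ 1 := by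
  unfold mismatch; split_ifs <;> omega

theorem mismatch_comm (u v : C) : mismatch u v = mismatch v u := by
  simp only [mismatch, eq_comm (a := u)]

theorem mismatch_le_add (u v w : C) : mismatch u w ≤ mismatch u v + mismatch v w := by
  unfold mismatch; grind

/-- A vertex with children in two different states `x ≠ z` costs at least one mutation below
it, and a second one on the edge to a parent of state `s` unless `s ∈ {x, z}`. -/
theorem one_add_min_mismatch_le {x z : C} (hxz : x ≠ z) (t s : C) :
    1 + min (mismatch s x) (mismatch s z) ≤ mismatch t s + (mismatch x t + mismatch z t) := by
  unfold mismatch; grind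

theorem ETree.changes_leaf (c : C) : (ETree.leaf c).changes = 0 := rfl

theorem ETree.changes_node (c : C) (l r : ETree C) :
    (ETree.node c l r).changes = mismatch l.root c + mismatch r.root c + (l.changes + r.changes) :=
  rfl

theorem pscore_le {f : X → C} {T : PTree X} {g : ETree C} (hg : IsExtension f T g) :
    pscore f T ≤ g.changes :=
  Nat.sInf_le ⟨g, hg, rfl⟩

theorem exists_pscore_eq (f : X → C) (T : PTree X) :
    ∃ g, IsExtension f T g ∧ g.changes = pscore f T :=
  Nat.sInf_mem (s := {k | ∃ g, IsExtension f T g ∧ g.changes = k})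
    (have ⟨g, hg⟩ := IsExtension.exists f T; ⟨_, g, hg, rfl⟩)

/-- Grafting an extension `hS` of `f'` over an occurrence of `S` in place of the part `gS` of `g`.
The bound also counts an edge from the root to a parent of arbitrary state `c`: that is what makes
it go through by induction. -/
theorem IsExtension.exists_graft {f : X → C} {S T : PTree X} (hST : IsSubtree S T)
    (hT : T.leaves.Nodup) {g : ETree C} (hg : IsExtension f T g) :
    ∃ gS, IsExtension f S gS ∧ ∀ (f' : X → C) (hS : ETree C), IsExtension f' S hS →
      (∀ x, x ∉ S.leaves → f' x = f x) → ∃ g', IsExtension f' T g' ∧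
        ∀ c, g'.changes + mismatch g'.root c + gS.changes ≤
          g.changes + mismatch g.root c + hS.changes + mismatch gS.root hS.root := by
  induction hST generalizing g with
  | refl =>
    refine ⟨g, hg, fun f' hS hS' _ => ⟨hS, hS', fun c => ?_⟩⟩
    have := mismatch_le_add hS.root g.root c
    rw [mismatch_comm hS.root g.root] at this
    omega
  | @left l r hSl ih =>
    cases hg with | node c hgl hgr => ?_
    have hdisj := List.disjoint_of_nodup_append hT
    obtain ⟨gS, hgS, hgraft⟩ := ih hT.of_append_left hgl
    refine ⟨gS, hgS, fun f' hS hS' hoff => ?_⟩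
    obtain ⟨gl', hgl', hle⟩ := hgraft f' hS hS' hoff
    have hgr' : IsExtension f' r _ := hgr.congr fun x hx =>
      (hoff x fun hxS => hdisj (hSl.leaves_sublist.subset hxS) hx).symm
    refine ⟨_, .node c hgl' hgr', fun c' => ?_⟩
    have := hle c
    simp only [ETree.changes_node, ETree.root_node]
    omega
  | @right l r hSr ih =>
    cases hg with | node c hgl hgr => ?_
    have hdisj := List.disjoint_of_nodup_append hT
    obtain ⟨gS, hgS, hgraft⟩ := ih hT.of_append_right hgr
    refine ⟨gS, hgS, fun f' hS hS' hoff => ?_⟩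
    obtain ⟨gr', hgr', hle⟩ := hgraft f' hS hS' hoff
    have hgl' : IsExtension f' l _ := hgl.congr fun x hx =>
      (hoff x fun hxS => hdisj hx (hSr.leaves_sublist.subset hxS)).symm
    refine ⟨_, .node c hgl' hgr', fun c' => ?_⟩
    have := hle c
    simp only [ETree.changes_node, ETree.root_node]
    omega

theorem exists_pscore_graft_le {S T : PTree X} (hST : IsSubtree S T) (hT : T.leaves.Nodup)
    (f : X → C) :
    ∃ gS, IsExtension f S gS ∧ ∀ (f' : X → C) (hS : ETree C), IsExtension f' S hS →
      (∀ x, x ∉ S.leaves → f' x = f x) →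
        pscore f' T + gS.changes ≤ pscore f T + hS.changes + mismatch gS.root hS.root := by
  obtain ⟨g, hg, hgf⟩ := exists_pscore_eq f T
  obtain ⟨gS, hgS, hgraft⟩ := hg.exists_graft hST hT
  refine ⟨gS, hgS, fun f' hS hS' hoff => ?_⟩
  obtain ⟨g', hg', hle⟩ := hgraft f' hS hS' hoff
  have hle' := hle g.root
  rw [mismatch_self] at hle'
  have := pscore_le hg'
  omega

theorem exists_pscore_recolour_cherry_le [DecidableEq X] {T : PTree X} {a b : X}
    (hab : IsCherry T a b) (hT : T.leaves.Nodup) (f : X → C) :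
    ∃ σ, ∀ y, pscore (recolour f a b y) T + (mismatch (f a) σ + mismatch (f b) σ) ≤
      pscore f T + mismatch σ y := by
  obtain ⟨gS, hgS, hgraft⟩ := exists_pscore_graft_le hab hT f
  cases hgS with | node σ ha hb => ?_
  cases ha; cases hb
  refine ⟨σ, fun y => ?_⟩
  have := hgraft (recolour f a b y) (.node y (.leaf y) (.leaf y)) ?_ ?_
  · simpa only [ETree.changes_node, ETree.changes_leaf, ETree.root_node, ETree.root_leaf,
      mismatch_self, add_zero] using this
  · exact .node y (.leaf_of_eq (recolour_apply_left ..)) (.leaf_of_eq (recolour_apply_right ..))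
  · intro x hx
    simp only [PTree.leaves, List.cons_append, List.nil_append, List.mem_cons, List.not_mem_nil,
      or_false, not_or] at hx
    exact recolour_apply_of_ne _ _ _ _ hx.1 hx.2

theorem exists_pscore_recolour_two_cherries_le [DecidableEq X] {T : PTree X} {a b c d : X}
    (hab : IsCherry T a b) (hcd : IsCherry T c d) (hT : T.leaves.Nodup) (hac : a ≠ c)
    (had : a ≠ d) (hbc : b ≠ c) (hbd : b ≠ d) (f : X → C) :
    ∃ x τ, ∀ z, pscore (recolour (recolour f a b x) c d z) T +
        (mismatch (f a) x + mismatch (f b) x + mismatch (f c) τ + mismatch (f d) τ) ≤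
      pscore f T + mismatch τ z := by
  obtain ⟨x, hx⟩ := exists_pscore_recolour_cherry_le hab hT f
  obtain ⟨τ, hτ⟩ := exists_pscore_recolour_cherry_le hcd hT (recolour f a b x)
  refine ⟨x, τ, fun z => ?_⟩
  have hab' := hx x
  have hcd' := hτ z
  rw [recolour_apply_of_ne _ _ _ _ hac.symm hbc.symm,
    recolour_apply_of_ne _ _ _ _ had.symm hbd.symm] at hcd'
  rw [mismatch_self] at hab'
  omega

theorem exists_pscore_double_cherry_le {T : PTree X} {a b c d : X}
    (hQ : IsSubtree (.node (.node (.leaf a) (.leaf c)) (.node (.leaf b) (.leaf d))) T)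
    (hT : T.leaves.Nodup) (f : X → C) (hac : f a ≠ f c) (hab : f a = f b) (hcd : f c = f d) :
    ∃ s, ∀ (f' : X → C) (s' : C), (∀ x, x ≠ a → x ≠ b → x ≠ c → x ≠ d → f' x = f x) →
      pscore f' T + (2 + 2 * min (mismatch s (f a)) (mismatch s (f c))) ≤
        pscore f T + (mismatch (f' a) s' + mismatch (f' b) s' + mismatch (f' c) s' +
          mismatch (f' d) s' + mismatch s s') := by
  obtain ⟨gS, hgS, hgraft⟩ := exists_pscore_graft_le hQ hT f
  cases hgS with | node s hl hr => ?_
  cases hl with | node t₁ ha hc => ?_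
  cases hr with | node t₂ hb hd => ?_
  cases ha; cases hb; cases hc; cases hd
  refine ⟨s, fun f' s' hoff => ?_⟩
  have hrestore := hgraft f'
    (.node s' (.node s' (.leaf (f' a)) (.leaf (f' c))) (.node s' (.leaf (f' b)) (.leaf (f' d))))
    (.node s' (.node s' (.leaf a) (.leaf c)) (.node s' (.leaf b) (.leaf d)))
    fun x hx => by
      simp only [PTree.leaves, List.cons_append, List.nil_append, List.mem_cons,
        List.not_mem_nil, or_false, not_or] at hx
      exact hoff x hx.1 hx.2.2.1 hx.2.1 hx.2.2.2
  have h₁ := one_add_min_mismatch_le hac t₁ s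
  have h₂ := one_add_min_mismatch_le hac t₂ s
  simp only [ETree.changes_node, ETree.changes_leaf, ETree.root_node, ETree.root_leaf,
    mismatch_self, ← hab, ← hcd] at hrestore
  omega

/-- `x` and `τ` are the states of the parents of the cherries `(a,b)` and `(c,d)` in `T1`,
`z` the new state of `c, d` and `s` the state above the double cherry in `T2`. -/
theorem exists_double_cherry_restore_le {x τ z : C} (hxz : x ≠ z) (hzτ : x ≠ τ → z = τ)
    (s p q r u : C) :
    ∃ s', mismatch p s' + mismatch q s' + mismatch r s' + mismatch u s' + mismatch s s' +
        mismatch τ z ≤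
      2 + 2 * min (mismatch s x) (mismatch s z) +
        (mismatch p x + mismatch q x + mismatch r τ + mismatch u τ) := by
  have := mismatch_le_one p x; have := mismatch_le_one q x
  have := mismatch_le_one r x; have := mismatch_le_one u x
  have := mismatch_le_one p τ; have := mismatch_le_one q τ
  have := mismatch_le_one τ z; have := mismatch_le_one s x
  by_cases hxτ : x = τ
  · subst hxτ
    exact ⟨x, by omega⟩
  obtain rfl := hzτ hxτ
  by_cases hsz : s = z
  · subst hsz
    exact ⟨s, by simp only [mismatch_self]; omega⟩
  · refine ⟨x, ?_⟩
    rw [mismatch_of_ne hsz, mismatch_self]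
    omega

theorem le_dMP_of_pos {T1 T2 : PTree X} (hpos : 0 < dMP T1 T2) (f : X → ℕ) :
    ((pscore f T1 : ℤ) - (pscore f T2 : ℤ)).natAbs ≤ dMP T1 T2 := by
  by_cases hbdd : BddAbove
      {k : ℕ | ∃ f : X → ℕ, k = ((pscore f T1 : ℤ) - (pscore f T2 : ℤ)).natAbs}
  · exact le_csSup hbdd ⟨f, rfl⟩
  · simp [dMP, csSup_of_not_bddAbove hbdd] at hpos

theorem natAbs_eq_dMP_of_le {T1 T2 : PTree X} {f f' : X → ℕ}
    (hopt : ((pscore f T1 : ℤ) - (pscore f T2 : ℤ)).natAbs = dMP T1 T2)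
    (hlt : pscore f T1 < pscore f T2)
    (hle : pscore f T2 + pscore f' T1 ≤ pscore f' T2 + pscore f T1) :
    ((pscore f' T1 : ℤ) - (pscore f' T2 : ℤ)).natAbs = dMP T1 T2 := by
  have := le_dMP_of_pos (T1 := T1) (T2 := T2) (by omega) f'
  omega

end Parsimony

/-- if `f` is optimal with `l_f(T1) < l_f(T2)`, `T1` contains
cherries `(a,b)` and `(c,d)` and `T2` contains the double cherry
`((a,c),(b,d))`, then there is an optimal character `f''` with
`f''(a) = f''(b)`, `f''(c) = f''(d)`, `f''(a) ≠ f''(c)`, agreeing with `f`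
on all other taxa. -/
theorem double_cherry_recolouring {X : Type} (T1 T2 : PTree X)
    (h1 : IsPhylo T1) (h2 : IsPhylo T2) (f : X → ℕ) (a b c d : X)
    (hopt : ((pscore f T1 : ℤ) - (pscore f T2 : ℤ)).natAbs = dMP T1 T2)
    (hlt : pscore f T1 < pscore f T2)
    (hab : IsCherry T1 a b) (hcd : IsCherry T1 c d)
    (hdc : IsSubtree
      (.node (.node (.leaf a) (.leaf c)) (.node (.leaf b) (.leaf d))) T2) :
    ∃ f'' : X → ℕ,
      ((pscore f'' T1 : ℤ) - (pscore f'' T2 : ℤ)).natAbs = dMP T1 T2 ∧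
      f'' a = f'' b ∧ f'' c = f'' d ∧ f'' a ≠ f'' c ∧
      ∀ x : X, x ≠ a → x ≠ b → x ≠ c → x ≠ d → f'' x = f x := by
  classical
  obtain ⟨hac, had, hbc, hbd⟩ := hdc.ne_of_double_cherry h2.1
  obtain ⟨x, τ, hT1⟩ :=
    exists_pscore_recolour_two_cherries_le hab hcd h1.1 hac had hbc hbd f
  set z := if x = τ then x + 1 else τ
  have hxz : x ≠ z := by grind
  have hT1z := hT1 z
  set f'' := recolour (recolour f a b x) c d z
  have hf''a : f'' a = x := (recolour_apply_of_ne _ _ _ _ hac had).trans (recolour_apply_left ..)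
  have hf''b : f'' b = x := (recolour_apply_of_ne _ _ _ _ hbc hbd).trans (recolour_apply_right ..)
  have hf''c : f'' c = z := recolour_apply_left ..
  have hf''d : f'' d = z := recolour_apply_right ..
  have hoff : ∀ y, y ≠ a → y ≠ b → y ≠ c → y ≠ d → f'' y = f y := fun y ha hb hc hd =>
    (recolour_apply_of_ne _ _ _ _ hc hd).trans (recolour_apply_of_ne _ _ _ _ ha hb)
  obtain ⟨s, hs⟩ := exists_pscore_double_cherry_le hdc h2.1 f'' (by rwa [hf''a, hf''c])
    (hf''a.trans hf''b.symm) (hf''c.trans hf''d.symm)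
  obtain ⟨s', hs'⟩ :=
    exists_double_cherry_restore_le hxz (fun h => if_neg h) s (f a) (f b) (f c) (f d)
  have hT2 := hs f s' fun y ha hb hc hd => (hoff y ha hb hc hd).symm
  rw [hf''a, hf''c] at hT2
  exact ⟨f'', natAbs_eq_dMP_of_le hopt hlt (by omega), hf''a.trans hf''b.symm,
    hf''c.trans hf''d.symm, by rwa [hf''a, hf''c], hoff⟩

end MPDist
end

section
/- Consider the rooted binary tree D = (w2,((w0,w4),(w3,(w5,w1)))) on the six leaves w0, w1, w2, w3, w4, w5 and characters with the two states red and blue. (i) For every assignment of states to w0 and w1 there exists an assignment of states to w2, w3, w4, w5 with w2 and w3 receiving the same state, such that the resulting character f on the six leaves has parsimony score l_f(D) = 2. (ii) Every character f on the six leaves using at most 2 states with f(w2) = f(w3) satisfies l_f(D) ≤ 2. -/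
namespace MPDist

/-- The gadget tree `D = (w2,((w0,w4),(w3,(w5,w1))))`, with leaf `wj`
represented by `(j : Fin 6)`. -/
def Dgadget6 : PTree (Fin 6) :=
  .node (.leaf 2)
    (.node (.node (.leaf 0) (.leaf 4))
           (.node (.leaf 3) (.node (.leaf 5) (.leaf 1))))

/-- The generic extension of a character `f` to `Dgadget6`, with internal
states `a` (root), `b`, `c`, `d`, `e`. -/
def extOf (f : Fin 6 → Fin 2) (a b c d e : Fin 2) : ETree (Fin 2) :=
  .node a (.leaf (f 2))
    (.node b (.node c (.leaf (f 0)) (.leaf (f 4)))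
             (.node d (.leaf (f 3)) (.node e (.leaf (f 5)) (.leaf (f 1)))))

theorem ext_iff (f : Fin 6 → Fin 2) (g : ETree (Fin 2)) :
    IsExtension f Dgadget6 g ↔ ∃ a b c d e : Fin 2, g = extOf f a b c d e := by
  constructor
  · intro h
    cases h with
    | node a h1 h2 =>
      cases h1
      cases h2 with
      | node b h3 h4 =>
        cases h3 with
        | node c h5 h6 =>
          cases h5; cases h6
          cases h4 with
          | node d h7 h8 =>
            cases h7
            cases h8 with
            | node e h9 h10 =>
              cases h9; cases h10
              exact ⟨a, b, c, d, e, rfl⟩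
  · rintro ⟨a, b, c, d, e, rfl⟩
    exact .node a (.leaf 2)
      (.node b (.node c (.leaf 0) (.leaf 4))
        (.node d (.leaf 3) (.node e (.leaf 5) (.leaf 1))))

/-- The parsimony score of `Dgadget6` as a finite minimum. -/
def scoreD (f : Fin 6 → Fin 2) : ℕ :=
  Finset.univ.inf' Finset.univ_nonempty
    (fun p : Fin 2 × Fin 2 × Fin 2 × Fin 2 × Fin 2 =>
      (extOf f p.1 p.2.1 p.2.2.1 p.2.2.2.1 p.2.2.2.2).changes)

theorem pscore_eq_scoreD (f : Fin 6 → Fin 2) : pscore f Dgadget6 = scoreD f := by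
  unfold pscore
  apply le_antisymm
  · obtain ⟨p, -, hp⟩ := Finset.exists_mem_eq_inf' (Finset.univ_nonempty)
      (fun p : Fin 2 × Fin 2 × Fin 2 × Fin 2 × Fin 2 =>
        (extOf f p.1 p.2.1 p.2.2.1 p.2.2.2.1 p.2.2.2.2).changes)
    exact Nat.sInf_le ⟨extOf f p.1 p.2.1 p.2.2.1 p.2.2.2.1 p.2.2.2.2,
      (ext_iff f _).mpr ⟨_, _, _, _, _, rfl⟩, hp.symm⟩
  · apply le_csInf
    · exact ⟨(extOf f 0 0 0 0 0).changes, ⟨extOf f 0 0 0 0 0,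
        (ext_iff f _).mpr ⟨0, 0, 0, 0, 0, rfl⟩, rfl⟩⟩
    rintro k ⟨g, hg, rfl⟩
    obtain ⟨a, b, c, d, e, rfl⟩ := (ext_iff f g).mp hg
    exact Finset.inf'_le _ (Finset.mem_univ (a, b, c, d, e))

set_option maxRecDepth 8000 in
/-- (i) for every assignment of the two states to `w0` and `w1`
there is an assignment to `w2,w3,w4,w5` with `w2,w3` equal such that the
resulting 2-state character has parsimony score exactly 2 on `D`;
(ii) every 2-state character with `f(w2) = f(w3)` has parsimony score at most 2
on `D`. -/
theorem Dgadget_score :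
    (∀ c0 c1 : Fin 2, ∃ f : Fin 6 → Fin 2,
      f 0 = c0 ∧ f 1 = c1 ∧ f 2 = f 3 ∧ pscore f Dgadget6 = 2) ∧
    (∀ f : Fin 6 → Fin 2, f 2 = f 3 → pscore f Dgadget6 ≤ 2) := by
  simp only [pscore_eq_scoreD]
  constructor
  · decide
  · decide

end MPDist
end

section
/- Let G = (V,E) be a connected, non-bipartite cubic graph and let T_V and T_E be the two rooted binary trees on a common taxon set constructed from G with parameter M = 36|E| + 8|V| as described. Then every character f using at most 2 states that attains d^2_MP(T_V,T_E) satisfies l_f(T_E) > l_f(T_V); in particular d^2_MP(T_V,T_E) = l_f(T_E) − l_f(T_V) for every such f. -/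
/-!
For two states, Fitch's algorithm computes the parsimony score, so every score below is a finite
computation. Tracking the score together with the Fitch root set, an exhaustive check on the
8-taxon trees `T_a`, `T_b` propagates up the copies to `l_f(S_V) ≤ l_f(S_E) + 10M` for every binary
character `f`, while the character with state 1 on taxa 3–6 of every block scores `4M` on `S_V`
and `16M` on `S_E`. The rest of `T_V` adds at most `B = 7(|V| + 3|E|) + 3` to the score of `S_V`,
and `S_E` is a subtree of `T_E`. Hence `d²_MP(T_V,T_E) ≥ 12M − B`, whereas a character with
`l_f(T_V) ≥ l_f(T_E)` reaches at most `10M + B`, and `B < M` as soon as `G` has an edge.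
-/

namespace MPDist

/-! ### The construction of `T_E` and `T_V` from a cubic graph `G = (V,E)`.

The graph has vertex set `{0,…,n-1}` and edge set `{0,…,m-1}`; `ends e` gives
the two (distinct) endpoints of edge `e`.  The taxa of the constructed trees
are encoded as natural numbers:
* `0 … 32M-1` : the taxa of `S_V = T^M_AA` and `S_E = T^M_BB`;
* `xTax M ends e u = 32M + 2e + side` : the taxon `x_e[u]` for `u` an endpoint
  of `e` (`side = 0/1` according to whether `u` is the first or second
  endpoint of `e`);
* `wTax M m i j = 32M + 2m + 4i + j` : the taxon `w_i^{j+2}` (`j = 0,1,2,3`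
  encodes `w_i^2, w_i^3, w_i^4, w_i^5`);
* `gTax M m i g = 32M + 6m + 4i + g` : the taxa `α_i, β_i, γ_i, δ_i`
  (`g = 0,1,2,3`). -/

/-- The taxon `x_e[u]`. -/
def xTax (M : ℕ) (ends : ℕ → ℕ × ℕ) (e u : ℕ) : ℕ :=
  32*M + 2*e + (if (ends e).1 = u then 0 else 1)

/-- The taxon `w_i^{j+2}` for `j = 0,1,2,3`. -/
def wTax (M m i j : ℕ) : ℕ := 32*M + 2*m + 4*i + j

/-- The taxa `α_i, β_i, γ_i, δ_i` for `g = 0,1,2,3`. -/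
def gTax (M m i g : ℕ) : ℕ := 32*M + 6*m + 4*i + g

/-- `S_V = T^M_AA`. -/
def SV (M : ℕ) : PTree ℕ := TkAA (M - 1)

/-- `S_E = T^M_BB`. -/
def SE (M : ℕ) : PTree ℕ := TkBB (M - 1)

/-- A binary tree shape whose leaves are labelled by `Option ℕ` (`none` is the
leaf that will be replaced by `S_E`, `some e` the leaf that will be replaced by
the cherry of edge `e`) and whose internal nodes are labelled by `ℕ`
(the enumeration `w_1,…,w_{|E|}` of the internal nodes). -/
inductive LTree : Type
  | leaf : Option ℕ → LTree
  | node : ℕ → LTree → LTree → LTree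

/-- The list of leaf labels of an `LTree`. -/
def LTree.leafLabels : LTree → List (Option ℕ)
  | .leaf x => [x]
  | .node _ l r => l.leafLabels ++ r.leafLabels

/-- The list of internal-node labels of an `LTree`. -/
def LTree.nodeLabels : LTree → List ℕ
  | .leaf _ => []
  | .node i l r => i :: (l.nodeLabels ++ r.nodeLabels)

/-- Expansion of the tree shape into the subtree `T` of `T_E`: the leaf `none`
becomes `S_E`, the leaf `some e` becomes the cherry `(x_e[u], x_e[v])` on the
endpoints `u,v` of `e`, and every internal node `w_i` becomes the gadget
`D(w_i) = (w_i^2,((w_i^0,w_i^4),(w_i^3,(w_i^5,w_i^1))))`, where `w_i^0` and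
`w_i^1` are identified with the expansions of the two children of `w_i`. -/
def expandT (M m : ℕ) (ends : ℕ → ℕ × ℕ) : LTree → PTree ℕ
  | .leaf none => SE M
  | .leaf (some e) =>
      .node (.leaf (xTax M ends e (ends e).1)) (.leaf (xTax M ends e (ends e).2))
  | .node i l r =>
      .node (.leaf (wTax M m i 0))
        (.node (.node (expandT M m ends l) (.leaf (wTax M m i 2)))
               (.node (.leaf (wTax M m i 1))
                      (.node (.leaf (wTax M m i 3)) (expandT M m ends r))))

/-- The double cherry `((α_i,γ_i),(β_i,δ_i))`. -/
def dCherry (M m i : ℕ) : PTree ℕ :=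
  .node (.node (.leaf (gTax M m i 0)) (.leaf (gTax M m i 2)))
        (.node (.leaf (gTax M m i 1)) (.leaf (gTax M m i 3)))

/-- The rooted caterpillar whose leaves, from the bottom up, are
`h 0, h 1, …, h k`. -/
def catm (h : ℕ → PTree ℕ) : ℕ → PTree ℕ
  | 0 => h 0
  | k+1 => .node (catm h k) (h (k+1))

/-- The tree `T_E`: the expanded tree `T` joined under a new root with the
caterpillar `T'` of the `n + 3m` double cherries, arranged according to the
bijection `σ'`. -/
def TEtree (n m M : ℕ) (ends : ℕ → ℕ × ℕ) (shape : LTree) (σ' : ℕ → ℕ) : PTree ℕ :=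
  .node (expandT M m ends shape)
        (catm (fun j => dCherry M m (σ' j)) (n + 3*m - 1))

/-- The rooted triplet `(x_e[u],(x_{e*}[u],x_{e**}[u]))` for the vertex `u`,
where `(e,e*,e**) = inc u` are the three edges incident to `u`. -/
def vTriplet (M : ℕ) (ends : ℕ → ℕ × ℕ) (inc : ℕ → ℕ × ℕ × ℕ) (u : ℕ) : PTree ℕ :=
  .node (.leaf (xTax M ends (inc u).1 u))
    (.node (.leaf (xTax M ends (inc u).2.1 u)) (.leaf (xTax M ends (inc u).2.2 u)))

/-- The canonical enumeration of the collection `J` of `1 + n + 3m` pendant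
trees of `T_V`: index `0` is `S_V`; indices `1,…,n` are the vertex triplets;
after that, each edge-gadget index `i < m` contributes the single-taxon trees
`w_i^4`, `w_i^5` and the cherry `(w_i^2, w_i^3)`. -/
def Jtree (n m M : ℕ) (ends : ℕ → ℕ × ℕ) (inc : ℕ → ℕ × ℕ × ℕ) (j : ℕ) : PTree ℕ :=
  if j = 0 then SV M
  else if j ≤ n then vTriplet M ends inc (j - 1)
  else
    if (j - n - 1) % 3 = 0 then .leaf (wTax M m ((j - n - 1) / 3) 2)
    else if (j - n - 1) % 3 = 1 then .leaf (wTax M m ((j - n - 1) / 3) 3)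
    else .node (.leaf (wTax M m ((j - n - 1) / 3) 0)) (.leaf (wTax M m ((j - n - 1) / 3) 1))

/-- The cherry switch with index `i` placed on an edge of the path `K`: the
edge is subdivided twice, the pendant cherry `(α_i,β_i)` hangs from one
subdivision vertex and `(γ_i,δ_i)` from the other; `t` is what is below. -/
def cSwitch (M m i : ℕ) (t : PTree ℕ) : PTree ℕ :=
  .node (.node (.leaf (gTax M m i 0)) (.leaf (gTax M m i 1)))
    (.node (.node (.leaf (gTax M m i 2)) (.leaf (gTax M m i 3))) t)

/-- The caterpillar of `T_V`, built bottom-up: position `p` of the caterpillar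
carries the pendant tree `Jtree (τ p)`, and the `j`-th edge (bottom-up) of the
root-to-cherry-leaf path `K` carries the cherry switch with index `σ j`. -/
def buildTV (n m M : ℕ) (ends : ℕ → ℕ × ℕ) (inc : ℕ → ℕ × ℕ × ℕ)
    (σ τ : ℕ → ℕ) : ℕ → PTree ℕ
  | 0 => .node (cSwitch M m (σ 0) (Jtree n m M ends inc (τ 0)))
               (Jtree n m M ends inc (τ 1))
  | j+1 => .node (cSwitch M m (σ (j+1)) (buildTV n m M ends inc σ τ j))
                 (Jtree n m M ends inc (τ (j+2)))

/-- The tree `T_V` (there are `n + 3m` edges on the path `K`). -/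
def TVtree (n m M : ℕ) (ends : ℕ → ℕ × ℕ) (inc : ℕ → ℕ × ℕ × ℕ)
    (σ τ : ℕ → ℕ) : PTree ℕ :=
  buildTV n m M ends inc σ τ (n + 3*m - 1)

/-- The graph `G` as a `SimpleGraph` on `Fin n`. -/
def Ggraph (n m : ℕ) (ends : ℕ → ℕ × ℕ) : SimpleGraph (Fin n) :=
  SimpleGraph.fromRel (fun u v => ∃ e < m, ends e = (u.val, v.val))

/-- `MAXCUT(G)`: the maximum, over all partitions of the vertex set into two
parts (given by `c : ℕ → Bool`), of the number of edges with one endpoint in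
each part. -/
noncomputable def maxcut (m : ℕ) (ends : ℕ → ℕ × ℕ) : ℕ :=
  sSup { k : ℕ | ∃ c : ℕ → Bool,
    k = ((Finset.range m).filter (fun e => c (ends e).1 ≠ c (ends e).2)).card }

/-- The nonempty sets of states `{0}`, `{1}`, `{0,1}` that Fitch's algorithm assigns to vertices. -/
inductive FitchSet : Type
  | zero | one | both
  deriving DecidableEq

instance : Fintype FitchSet :=
  ⟨⟨↑[FitchSet.zero, FitchSet.one, FitchSet.both], by decide⟩, fun S => by cases S <;> decide⟩

namespace FitchSet

def ofState (c : Fin 2) : FitchSet := if c = 0 then zero else one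

def contains : FitchSet → Fin 2 → Bool
  | zero, c => c = 0
  | one, c => c = 1
  | both, _ => true

theorem contains_ofState_iff : ∀ c d : Fin 2, (ofState d).contains c ↔ c = d := by decide

/-- Fitch's rule: the intersection of the two sets if it is nonempty, else their union. -/
def merge : FitchSet → FitchSet → FitchSet
  | both, S => S
  | S, both => S
  | zero, zero => zero
  | one, one => one
  | _, _ => both

def cost : FitchSet → FitchSet → ℕ
  | zero, one => 1
  | one, zero => 1
  | _, _ => 0

theorem cost_le_one : ∀ a b : FitchSet, cost a b ≤ 1 := by decide

def slack : FitchSet → ℕ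
  | both => 0
  | _ => 1

end FitchSet

open FitchSet

def fitchRoot : PTree (Fin 2) → FitchSet
  | .leaf c => ofState c
  | .node l r => merge (fitchRoot l) (fitchRoot r)

def fitchScore : PTree (Fin 2) → ℕ
  | .leaf _ => 0
  | .node l r => fitchScore l + fitchScore r + cost (fitchRoot l) (fitchRoot r)

theorem fitchScore_add_le_changes {X : Type} (f : X → Fin 2) {T : PTree X}
    {g : ETree (Fin 2)} (hg : IsExtension f T g) :
    fitchScore (T.map f) + (if (fitchRoot (T.map f)).contains g.root then 0 else 1) ≤
      g.changes := by
  induction hg with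
  | leaf x => simp [PTree.map, fitchScore, fitchRoot, ETree.changes, ETree.root,
      contains_ofState_iff]
  | @node l r gl gr c _ _ ihl ihr =>
    have key : ∀ (a b : FitchSet) (x y : Fin 2),
        cost a b + (if (merge a b).contains c then 0 else 1) ≤
          ((if x = c then 0 else 1) + (if y = c then 0 else 1)) +
            ((if a.contains x then 0 else 1) + (if b.contains y then 0 else 1)) := by
      revert c; decide
    have := key (fitchRoot (l.map f)) (fitchRoot (r.map f)) gl.root gr.root
    simp only [PTree.map, fitchScore, fitchRoot, ETree.changes, ETree.root] at *
    omega

theorem exists_extension_changes_eq {X : Type} (f : X → Fin 2) (T : PTree X) (c : Fin 2)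
    (hc : (fitchRoot (T.map f)).contains c) :
    ∃ g : ETree (Fin 2), IsExtension f T g ∧ g.root = c ∧
      g.changes = fitchScore (T.map f) := by
  induction T generalizing c with
  | leaf x =>
    obtain rfl : c = f x := (contains_ofState_iff c (f x)).mp hc
    exact ⟨.leaf (f x), .leaf x, rfl, rfl⟩
  | node l r ihl ihr =>
    have key : ∀ (a b : FitchSet) (c : Fin 2), (merge a b).contains c →
        ∃ x y : Fin 2, a.contains x ∧ b.contains y ∧
          (if x = c then 0 else 1) + (if y = c then 0 else 1) = cost a b := by
      decide
    obtain ⟨x, y, hx, hy, hcost⟩ := key _ _ c hc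
    obtain ⟨gl, hgl, rfl, hl⟩ := ihl _ hx
    obtain ⟨gr, hgr, rfl, hr⟩ := ihr _ hy
    refine ⟨.node c gl gr, .node c hgl hgr, rfl, ?_⟩
    simp only [ETree.changes, PTree.map, fitchScore, hl, hr, ← hcost]
    omega

theorem pscore_eq_fitchScore {X : Type} (f : X → Fin 2) (T : PTree X) :
    pscore f T = fitchScore (T.map f) := by
  obtain ⟨c, hc⟩ : ∃ c, (fitchRoot (T.map f)).contains c := by
    cases fitchRoot (T.map f) <;> decide
  obtain ⟨g, hg, -, hchanges⟩ := exists_extension_changes_eq f T c hc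
  refine le_antisymm (Nat.sInf_le ⟨g, hg, hchanges⟩) (le_csInf ⟨_, g, hg, hchanges⟩ ?_)
  rintro k ⟨g', hg', rfl⟩
  have := fitchScore_add_le_changes f hg'
  omega

theorem PTree.map_map {X Y Z : Type} (g : X → Y) (f : Y → Z) (T : PTree X) :
    (T.map g).map f = T.map (f ∘ g) := by
  induction T with
  | leaf x => rfl
  | node l r ihl ihr => simp [PTree.map, ihl, ihr]

theorem PTree.length_leaves_map {X Y : Type} (f : X → Y) (T : PTree X) :
    (T.map f).leaves.length = T.leaves.length := by
  induction T with
  | leaf x => rfl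
  | node l r ihl ihr => simp [PTree.map, PTree.leaves, ihl, ihr]

theorem IsSubtree.map {X Y : Type} (f : X → Y) {s t : PTree X} (h : IsSubtree s t) :
    IsSubtree (s.map f) (t.map f) := by
  induction h with
  | refl => exact .refl _
  | left _ ih => exact .left ih
  | right _ ih => exact .right ih

theorem fitchScore_lt_length (T : PTree (Fin 2)) : fitchScore T < T.leaves.length := by
  induction T with
  | leaf c => simp [fitchScore, PTree.leaves]
  | node l r ihl ihr =>
    have := cost_le_one (fitchRoot l) (fitchRoot r)
    simp only [fitchScore, PTree.leaves, List.length_append]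
    omega

theorem IsSubtree.fitchScore_le {s t : PTree (Fin 2)} (h : IsSubtree s t) :
    fitchScore s ≤ fitchScore t := by
  induction h with
  | refl => rfl
  | left _ ih => simp only [fitchScore]; omega
  | right _ ih => simp only [fitchScore]; omega

/-- Every leaf outside `s` adds at most one change. -/
theorem IsSubtree.fitchScore_add_length_le {s t : PTree (Fin 2)} (h : IsSubtree s t) :
    fitchScore t + s.leaves.length ≤ fitchScore s + t.leaves.length := by
  induction h with
  | refl => rfl
  | @left l r _ ih =>
    have := fitchScore_lt_length r
    have := cost_le_one (fitchRoot l) (fitchRoot r)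
    simp only [fitchScore, PTree.leaves, List.length_append]
    omega
  | @right l r _ ih =>
    have := fitchScore_lt_length l
    have := cost_le_one (fitchRoot l) (fitchRoot r)
    simp only [fitchScore, PTree.leaves, List.length_append]
    omega

section Pscore

variable {X : Type} (f : X → Fin 2)

theorem pscore_lt_length (T : PTree X) : pscore f T < T.leaves.length := by
  simpa [pscore_eq_fitchScore, PTree.length_leaves_map] using fitchScore_lt_length (T.map f)

theorem IsSubtree.pscore_le {s t : PTree X} (h : IsSubtree s t) : pscore f s ≤ pscore f t := by
  simpa [pscore_eq_fitchScore] using (h.map f).fitchScore_le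

theorem IsSubtree.pscore_add_length_le {s t : PTree X} (h : IsSubtree s t) :
    pscore f t + s.leaves.length ≤ pscore f s + t.leaves.length := by
  simpa [pscore_eq_fitchScore, PTree.length_leaves_map] using
    (h.map f).fitchScore_add_length_le

theorem natAbs_sub_le_dMPk_two (T₁ T₂ : PTree X) :
    ((pscore f T₁ : ℤ) - pscore f T₂).natAbs ≤ dMPk 2 T₁ T₂ := by
  refine le_csSup ⟨T₁.leaves.length + T₂.leaves.length, ?_⟩ ⟨f, rfl⟩
  rintro k ⟨g, rfl⟩
  have := pscore_lt_length g T₁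
  have := pscore_lt_length g T₂
  omega

end Pscore

/-- The largest parsimony score of `T` among extensions with a prescribed root state. -/
def worstRootScore (T : PTree (Fin 2)) : ℕ := fitchScore T + (fitchRoot T).slack

theorem fitchScore_le_worstRootScore (T : PTree (Fin 2)) : fitchScore T ≤ worstRootScore T :=
  Nat.le_add_right _ _

theorem worstRootScore_node_le (l r : PTree (Fin 2)) :
    worstRootScore (.node l r) ≤ worstRootScore l + worstRootScore r := by
  have key : ∀ a b : FitchSet, cost a b + slack (merge a b) ≤ slack a + slack b := by decide
  have := key (fitchRoot l) (fitchRoot r)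
  simp only [worstRootScore, fitchScore, fitchRoot]
  omega

theorem worstRootScore_node_le_of_le {a₁ a₂ b₁ b₂ : PTree (Fin 2)} {c₁ c₂ : ℕ}
    (h₁ : worstRootScore a₁ ≤ fitchScore b₁ + c₁) (h₂ : worstRootScore a₂ ≤ fitchScore b₂ + c₂) :
    worstRootScore (.node a₁ a₂) ≤ fitchScore (.node b₁ b₂) + (c₁ + c₂) := by
  have := worstRootScore_node_le a₁ a₂
  simp only [fitchScore]
  omega

theorem map_shiftT (s : ℕ) (f : ℕ → Fin 2) (T : PTree ℕ) :
    (shiftT s T).map f = T.map (fun x => f (x + s)) :=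
  PTree.map_map _ _ _

def excess8 : FitchSet → FitchSet → ℕ
  | zero, one => 0
  | one, zero => 0
  | _, _ => 2

theorem fitchScore_Ta8_le (f : ℕ → Fin 2) :
    fitchScore (Ta8.map f) ≤
      fitchScore (Tb8.map f) + excess8 (fitchRoot (Ta8.map f)) (fitchRoot (Tb8.map f)) := by
  have key : ∀ x₀ x₁ x₂ x₃ x₄ x₅ x₆ x₇ : Fin 2,
      let g : ℕ → Fin 2 := fun i => [x₀, x₁, x₂, x₃, x₄, x₅, x₆, x₇].getD i 0
      fitchScore (Ta8.map g) ≤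
        fitchScore (Tb8.map g) + excess8 (fitchRoot (Ta8.map g)) (fitchRoot (Tb8.map g)) := by
    decide
  exact key (f 0) (f 1) (f 2) (f 3) (f 4) (f 5) (f 6) (f 7)

theorem worstRootScore_TA16_le (f : ℕ → Fin 2) :
    worstRootScore (TA16.map f) ≤ fitchScore (TB16.map f) + 5 := by
  have key : ∀ a b a' b' : FitchSet,
      excess8 a b + excess8 a' b' + cost a a' + slack (merge a a') ≤ 5 + cost b b' := by
    decide
  have h := fitchScore_Ta8_le f
  have h' := fitchScore_Ta8_le (fun x => f (x + 8))
  have := key (fitchRoot (Ta8.map f)) (fitchRoot (Tb8.map f))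
    (fitchRoot (Ta8.map (fun x => f (x + 8)))) (fitchRoot (Tb8.map (fun x => f (x + 8))))
  simp only [worstRootScore, TA16, TB16, PTree.map, map_shiftT, fitchScore, fitchRoot]
  omega

theorem worstRootScore_TAA_le (f : ℕ → Fin 2) :
    worstRootScore (TAA.map f) ≤ fitchScore (TBB.map f) + 10 := by
  simp only [TAA, TBB, PTree.map, map_shiftT]
  exact worstRootScore_node_le_of_le (worstRootScore_TA16_le _) (worstRootScore_TA16_le _)

theorem map_TkAA_succ (k : ℕ) (f : ℕ → Fin 2) :
    (TkAA (k + 1)).map f = .node ((TkAA k).map f) (TAA.map (fun x => f (x + 32 * (k + 1)))) := by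
  rw [← map_shiftT]; rfl

theorem map_TkBB_succ (k : ℕ) (f : ℕ → Fin 2) :
    (TkBB (k + 1)).map f = .node ((TkBB k).map f) (TBB.map (fun x => f (x + 32 * (k + 1)))) := by
  rw [← map_shiftT]; rfl

theorem worstRootScore_TkAA_le (k : ℕ) (f : ℕ → Fin 2) :
    worstRootScore ((TkAA k).map f) ≤ fitchScore ((TkBB k).map f) + 10 * (k + 1) := by
  induction k with
  | zero => exact worstRootScore_TAA_le f
  | succ k ih =>
    rw [map_TkAA_succ, map_TkBB_succ]
    exact (worstRootScore_node_le_of_le ih (worstRootScore_TAA_le _)).trans_eq (by ring)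

/-- State `1` exactly on the taxa `3, 4, 5, 6` of every copy of `T_a` and of `T_b`. -/
def witness (x : ℕ) : Fin 2 := if 2 ≤ x % 8 ∧ x % 8 ≤ 5 then 1 else 0

theorem witness_add_mul_eight (k : ℕ) : (fun x => witness (x + 8 * k)) = witness := by
  funext x
  simp only [witness, Nat.add_mul_mod_self_left]

theorem worstRootScore_TkAA_witness_le (k : ℕ) :
    worstRootScore ((TkAA k).map witness) ≤ 4 * (k + 1) := by
  have base : worstRootScore (TAA.map witness) = 4 := by decide
  induction k with
  | zero => exact base.le
  | succ k ih =>
    rw [map_TkAA_succ, show 32 * (k + 1) = 8 * (4 * (k + 1)) by ring, witness_add_mul_eight]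
    have := worstRootScore_node_le ((TkAA k).map witness) (TAA.map witness)
    omega

theorem fitchScore_TkBB_witness_ge (k : ℕ) :
    16 * (k + 1) ≤ fitchScore ((TkBB k).map witness) := by
  have base : fitchScore (TBB.map witness) = 16 := by decide
  induction k with
  | zero => exact base.ge
  | succ k ih =>
    rw [map_TkBB_succ, show 32 * (k + 1) = 8 * (4 * (k + 1)) by ring, witness_add_mul_eight]
    simp only [fitchScore]
    omega

section Gadgets

variable {M : ℕ}

theorem pscore_SV_le (hM : 0 < M) (f : ℕ → Fin 2) :
    pscore f (SV M) ≤ pscore f (SE M) + 10 * M := by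
  obtain ⟨k, rfl⟩ := Nat.exists_eq_add_one.mpr hM
  simpa [pscore_eq_fitchScore, SV, SE] using
    (fitchScore_le_worstRootScore _).trans (worstRootScore_TkAA_le k f)

theorem pscore_witness_SV_le (hM : 0 < M) : pscore witness (SV M) ≤ 4 * M := by
  obtain ⟨k, rfl⟩ := Nat.exists_eq_add_one.mpr hM
  simpa [pscore_eq_fitchScore, SV] using
    (fitchScore_le_worstRootScore _).trans (worstRootScore_TkAA_witness_le k)

theorem pscore_witness_SE_ge (hM : 0 < M) : 16 * M ≤ pscore witness (SE M) := by
  obtain ⟨k, rfl⟩ := Nat.exists_eq_add_one.mpr hM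
  simpa [pscore_eq_fitchScore, SE] using fitchScore_TkBB_witness_ge k

end Gadgets

theorem sum_comp_le_of_injOn {α : Type} [DecidableEq α] {τ : ℕ → α} {k : ℕ}
    (hτ : Set.InjOn τ (Set.Iio k)) {g : α → ℕ} {a : α} {c : ℕ} (hg : ∀ b ≠ a, g b ≤ c) :
    ∑ p ∈ Finset.range k, g (τ p) ≤ g a + k * c := by
  rw [← Finset.sum_filter_add_sum_filter_not (Finset.range k) (fun p => τ p = a)]
  have hcard : ((Finset.range k).filter (fun p => τ p = a)).card ≤ 1 := by
    refine Finset.card_le_one.mpr fun p hp q hq => ?_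
    simp only [Finset.mem_filter, Finset.mem_range] at hp hq
    exact hτ hp.1 hq.1 (hp.2.trans hq.2.symm)
  have hcard' := (Finset.range k).card_filter_le (fun p => τ p ≠ a)
  rw [Finset.card_range] at hcard'
  calc _ ≤ ((Finset.range k).filter (fun p => τ p = a)).card • g a +
        ((Finset.range k).filter (fun p => τ p ≠ a)).card • c :=
        add_le_add (Finset.sum_le_card_nsmul _ _ _ fun p hp => (Finset.mem_filter.mp hp).2 ▸ le_rfl)
          (Finset.sum_le_card_nsmul _ _ _ fun p hp => hg _ (Finset.mem_filter.mp hp).2)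
    _ ≤ 1 • g a + k • c := by gcongr
    _ = g a + k * c := by rw [one_smul, smul_eq_mul]

theorem pos_of_not_colorable_two {n m : ℕ} {ends : ℕ → ℕ × ℕ}
    (h : ¬ (Ggraph n m ends).Colorable 2) : 0 < m := by
  by_contra! hm
  refine h ⟨SimpleGraph.Coloring.mk (fun _ => 0) fun hadj => ?_⟩
  obtain ⟨-, ⟨e, he, -⟩ | ⟨e, he, -⟩⟩ := SimpleGraph.fromRel_adj _ _ _ |>.mp hadj <;> omega

section Construction

variable {n m M : ℕ} {ends : ℕ → ℕ × ℕ} {inc : ℕ → ℕ × ℕ × ℕ} {σ τ : ℕ → ℕ}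

theorem isSubtree_Jtree_buildTV {p j : ℕ} (hp : p ≤ j + 1) :
    IsSubtree (Jtree n m M ends inc (τ p)) (buildTV n m M ends inc σ τ j) := by
  induction j generalizing p with
  | zero =>
    interval_cases p
    · exact .left (.right (.right (.refl _)))
    · exact .right (.refl _)
  | succ j ih =>
    rcases Nat.lt_or_ge p (j + 2) with hp' | hp'
    · exact .left (.right (.right (ih (by omega))))
    · obtain rfl : p = j + 2 := by omega
      exact .right (.refl _)

theorem length_leaves_buildTV (j : ℕ) :
    (buildTV n m M ends inc σ τ j).leaves.length =
      4 * (j + 1) + ∑ p ∈ Finset.range (j + 2), (Jtree n m M ends inc (τ p)).leaves.length := by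
  induction j with
  | zero => simp [buildTV, cSwitch, PTree.leaves, Finset.sum_range_succ]; omega
  | succ j ih =>
    simp only [buildTV, cSwitch, PTree.leaves, List.length_append, List.length_cons,
      List.length_nil, ih, Finset.sum_range_succ (n := j + 2)]
    omega

theorem length_leaves_Jtree_le {j : ℕ} (hj : j ≠ 0) :
    (Jtree n m M ends inc j).leaves.length ≤ 3 := by
  rw [Jtree, if_neg hj]
  split_ifs <;> simp [vTriplet, PTree.leaves]

theorem Jtree_zero : Jtree n m M ends inc 0 = SV M := if_pos rfl

theorem length_leaves_buildTV_le {j : ℕ} (hτ : Set.InjOn τ (Set.Iio (j + 2))) :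
    (buildTV n m M ends inc σ τ j).leaves.length ≤ (SV M).leaves.length + 7 * j + 10 := by
  have := sum_comp_le_of_injOn hτ (a := 0)
    (g := fun i => (Jtree n m M ends inc i).leaves.length) fun _ => length_leaves_Jtree_le
  beta_reduce at this
  rw [Jtree_zero] at this
  rw [length_leaves_buildTV]
  omega

theorem pscore_TVtree_le (hpos : 0 < n + 3 * m) (hinj : Set.InjOn τ (Set.Iio (n + 3 * m + 1)))
    (hsurj : 0 ∈ τ '' Set.Iio (n + 3 * m + 1)) (f : ℕ → Fin 2) :
    pscore f (TVtree n m M ends inc σ τ) ≤ pscore f (SV M) + 7 * (n + 3 * m) + 3 := by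
  obtain ⟨p, hp, hp0⟩ := hsurj
  have hsub : IsSubtree (Jtree n m M ends inc 0) (TVtree n m M ends inc σ τ) :=
    hp0 ▸ isSubtree_Jtree_buildTV (by rw [Set.mem_Iio] at hp; omega)
  have hlen : (TVtree n m M ends inc σ τ).leaves.length ≤
      (SV M).leaves.length + 7 * (n + 3 * m - 1) + 10 :=
    length_leaves_buildTV_le (by rwa [show n + 3 * m - 1 + 2 = n + 3 * m + 1 by omega])
  have := hsub.pscore_add_length_le f
  rw [Jtree_zero] at this
  omega

theorem isSubtree_SE_expandT {shape : LTree} (h : none ∈ shape.leafLabels) :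
    IsSubtree (SE M) (expandT M m ends shape) := by
  induction shape with
  | leaf o =>
    obtain rfl : o = none := by simpa [LTree.leafLabels, eq_comm] using h
    exact .refl _
  | node i l r ihl ihr =>
    rcases List.mem_append.mp h with h | h
    · exact .right (.left (.left (ihl h)))
    · exact .right (.right (.right (.right (ihr h))))

end Construction

theorem optimal_characters_asymmetric_on_construction_general
    (n m M : ℕ)
    (hM : M = 36*m + 8*n)
    (ends : ℕ → ℕ × ℕ)
    -- the graph is connected and not bipartite
    (hnotbip : ¬ (Ggraph n m ends).Colorable 2)
    -- `inc u` lists the three (pairwise distinct) edges incident to vertex `u`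
    (inc : ℕ → ℕ × ℕ × ℕ)
    -- an arbitrary binary tree shape on `m+1` leaves: its leaves are labelled
    -- bijectively by `{none} ∪ {some e | e < m}` and its internal nodes
    -- bijectively by `{0,…,m-1}`
    (shape : LTree)
    (hshapeLeaf : ∀ x : Option ℕ,
      x ∈ shape.leafLabels ↔ (x = none ∨ ∃ e < m, x = some e))
    -- arbitrary bijections: `σ` assigns switch indices to the `n+3m` edges of
    -- the path `K`, `τ` assigns the trees of `J` to the `n+3m+1` caterpillar
    -- leaves of `T_V`, and `σ'` assigns the double cherries to the `n+3m`
    -- caterpillar leaves of `T'`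
    (σ τ σ' : ℕ → ℕ)
    (hτ : Set.BijOn τ (Set.Iio (n + 3*m + 1)) (Set.Iio (n + 3*m + 1)))
    :
    ∀ f : ℕ → Fin 2,
      ((pscore f (TVtree n m M ends inc σ τ) : ℤ) -
        (pscore f (TEtree n m M ends shape σ') : ℤ)).natAbs =
          dMPk 2 (TVtree n m M ends inc σ τ) (TEtree n m M ends shape σ') →
      pscore f (TVtree n m M ends inc σ τ) < pscore f (TEtree n m M ends shape σ') ∧
      (dMPk 2 (TVtree n m M ends inc σ τ) (TEtree n m M ends shape σ') : ℤ) =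
        (pscore f (TEtree n m M ends shape σ') : ℤ) -
          (pscore f (TVtree n m M ends inc σ τ) : ℤ) := by
  intro f hf
  have hm : 0 < m := pos_of_not_colorable_two hnotbip
  have hMpos : 0 < M := by omega
  have hTV (g : ℕ → Fin 2) :
      pscore g (TVtree n m M ends inc σ τ) ≤ pscore g (SV M) + 7 * (n + 3 * m) + 3 :=
    pscore_TVtree_le (by omega) hτ.injOn (hτ.surjOn (by simp)) g
  have hTE (g : ℕ → Fin 2) : pscore g (SE M) ≤ pscore g (TEtree n m M ends shape σ') :=
    (isSubtree_SE_expandT ((hshapeLeaf none).mpr (.inl rfl))).left.pscore_le g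
  have hdist := natAbs_sub_le_dMPk_two witness
    (TVtree n m M ends inc σ τ) (TEtree n m M ends shape σ')
  have := hTV witness
  have := hTE witness
  have := hTV f
  have := hTE f
  have := pscore_SV_le hMpos f
  have := pscore_witness_SV_le hMpos
  have := pscore_witness_SE_ge hMpos
  omega

/-- for every connected non-bipartite cubic graph `G` and every
choice of the arbitrary data in the construction (with `M = 36|E| + 8|V|`),
every character with at most 2 states attaining `d^2_MP(T_V,T_E)` satisfies
`l_f(T_E) > l_f(T_V)`; in particular `d^2_MP(T_V,T_E) = l_f(T_E) − l_f(T_V)`. -/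
theorem optimal_characters_asymmetric_on_construction
    (n m M : ℕ)
    (hM : M = 36*m + 8*n)
    (ends : ℕ → ℕ × ℕ)
    -- the endpoints of each edge are two distinct vertices
    (hends : ∀ e < m, (ends e).1 < n ∧ (ends e).2 < n ∧ (ends e).1 ≠ (ends e).2)
    -- the graph is simple: distinct edges have distinct (unordered) endpoint pairs
    (hsimple : ∀ e < m, ∀ e' < m, e ≠ e' →
      ends e ≠ ends e' ∧ ends e ≠ ((ends e').2, (ends e').1))
    -- the graph is cubic: every vertex lies on exactly 3 edges
    (hcubic : ∀ v < n,
      ((Finset.range m).filter (fun e => (ends e).1 = v ∨ (ends e).2 = v)).card = 3)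
    -- the graph is connected and not bipartite
    (hconn : (Ggraph n m ends).Connected)
    (hnotbip : ¬ (Ggraph n m ends).Colorable 2)
    -- `inc u` lists the three (pairwise distinct) edges incident to vertex `u`
    (inc : ℕ → ℕ × ℕ × ℕ)
    (hinc : ∀ u < n,
      (inc u).1 < m ∧ (inc u).2.1 < m ∧ (inc u).2.2 < m ∧
      (inc u).1 ≠ (inc u).2.1 ∧ (inc u).1 ≠ (inc u).2.2 ∧ (inc u).2.1 ≠ (inc u).2.2 ∧
      ((ends (inc u).1).1 = u ∨ (ends (inc u).1).2 = u) ∧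
      ((ends (inc u).2.1).1 = u ∨ (ends (inc u).2.1).2 = u) ∧
      ((ends (inc u).2.2).1 = u ∨ (ends (inc u).2.2).2 = u))
    -- an arbitrary binary tree shape on `m+1` leaves: its leaves are labelled
    -- bijectively by `{none} ∪ {some e | e < m}` and its internal nodes
    -- bijectively by `{0,…,m-1}`
    (shape : LTree)
    (hshapeLeafNodup : shape.leafLabels.Nodup)
    (hshapeLeaf : ∀ x : Option ℕ,
      x ∈ shape.leafLabels ↔ (x = none ∨ ∃ e < m, x = some e))
    (hshapeNodeNodup : shape.nodeLabels.Nodup)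
    (hshapeNode : ∀ i : ℕ, i ∈ shape.nodeLabels ↔ i < m)
    -- arbitrary bijections: `σ` assigns switch indices to the `n+3m` edges of
    -- the path `K`, `τ` assigns the trees of `J` to the `n+3m+1` caterpillar
    -- leaves of `T_V`, and `σ'` assigns the double cherries to the `n+3m`
    -- caterpillar leaves of `T'`
    (σ τ σ' : ℕ → ℕ)
    (hσ : Set.BijOn σ (Set.Iio (n + 3*m)) (Set.Iio (n + 3*m)))
    (hτ : Set.BijOn τ (Set.Iio (n + 3*m + 1)) (Set.Iio (n + 3*m + 1)))
    (hσ' : Set.BijOn σ' (Set.Iio (n + 3*m)) (Set.Iio (n + 3*m)))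
    :
    ∀ f : ℕ → Fin 2,
      ((pscore f (TVtree n m M ends inc σ τ) : ℤ) -
        (pscore f (TEtree n m M ends shape σ') : ℤ)).natAbs =
          dMPk 2 (TVtree n m M ends inc σ τ) (TEtree n m M ends shape σ') →
      pscore f (TVtree n m M ends inc σ τ) < pscore f (TEtree n m M ends shape σ') ∧
      (dMPk 2 (TVtree n m M ends inc σ τ) (TEtree n m M ends shape σ') : ℤ) =
        (pscore f (TEtree n m M ends shape σ') : ℤ) -
          (pscore f (TVtree n m M ends inc σ τ) : ℤ) :=
  optimal_characters_asymmetric_on_construction_general n m M hM ends hnotbip inc shape hshapeLeaf σ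
    τ σ' hτ

end MPDist
end
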